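/- Let d ≥ 2, p, q ∈ [0,1], and γ ≥ 1. Define the normalized Choi state of the depolarizing channel with parameter p on ℂ^d ⊗ ℂ^d by ρ_p := (1−p)·Φ + (p/d²)·I, where Φ is the maximally entangled state. Then the hockey-stick divergence satisfies E_γ(ρ_q‖ρ_p) = max{0, (1−q) − γ(1−p) + (q − γp)/d², (q − γp) − (q − γp)/d²} (equivalently, this is the hockey-stick channel divergence between the depolarizing channels with parameters q and p under all measurements). -/

import Mathlib

noncomputable section
open Matrix ComplexOrder

/-- Bipartite complex matrices on ℂ^d ⊗ ℂ^d. -/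
abbrev BMat (d : ℕ) := Matrix (Fin d × Fin d) (Fin d × Fin d) ℂ

/-- The maximally entangled state `Φ = (1/d) Σ_{i,j} |i⟩⟨j| ⊗ |i⟩⟨j|`. -/
def maxEnt (d : ℕ) : BMat d :=
  fun p q => if p.1 = p.2 ∧ q.1 = q.2 then ((d : ℂ))⁻¹ else 0

/-- The normalized Choi state of the depolarizing channel with parameter `p`:
`ρ_p = (1−p)Φ + (p/d²)I`. -/
def depolChoi (d : ℕ) (p : ℝ) : BMat d :=
  ((1 - p : ℝ) : ℂ) • maxEnt d + ((p / (d : ℝ) ^ 2 : ℝ) : ℂ) • (1 : BMat d)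

/-- Hockey-stick divergence (all measurements) for γ ≥ 1. -/
def Eg {d : ℕ} (γ : ℝ) (ρ σ : BMat d) : ℝ :=
  sSup {x : ℝ | ∃ M : BMat d, M.PosSemidef ∧ ((1 : BMat d) - M).PosSemidef ∧
    x = ((M * (ρ - (γ : ℂ) • σ)).trace).re}

/-!
Write `Φ = maxEnt d`. The operator `ρ_q - γ ρ_p` equals `α Φ + β (1 - Φ)` with
`α = (1 - q) - γ (1 - p) + (q - γ p)/d²` and `β = (q - γ p)/d²`. For `0 ≤ M ≤ 1` and a projection
`P`, `Tr[M P]` is real and lies in `[0, Tr P]`, so `Tr[M (α Φ + β (1 - Φ))] ≤ α⁺ + β⁺ (d² - 1)`,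
with equality for `M = [α ≥ 0] Φ + [β ≥ 0] (1 - Φ)`. Finally `α + β (d² - 1) = Tr[ρ_q - γ ρ_p] = 1 - γ ≤ 0`,
so at most one of the two terms is positive and `α⁺ + β⁺ (d² - 1) = max 0 (max α (β (d² - 1)))`.
-/

open scoped MatrixOrder

namespace Matrix

variable {n : Type*} [Fintype n] [DecidableEq n]

theorem PosSemidef.trace_mul_nonneg {A B : Matrix n n ℂ} (hA : A.PosSemidef)
    (hB : B.PosSemidef) : 0 ≤ (A * B).trace := by
  obtain ⟨C, rfl⟩ := CStarAlgebra.nonneg_iff_eq_star_mul_self.mp hB.nonneg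
  rw [← mul_assoc, trace_mul_comm, ← mul_assoc]
  exact (hA.mul_mul_conjTranspose_same C).trace_nonneg

theorem re_trace_mul_mem_Icc {M Q : Matrix n n ℂ} (hM : M.PosSemidef) (hM' : (1 - M).PosSemidef)
    (hQ : Q.PosSemidef) : (M * Q).trace.re ∈ Set.Icc 0 Q.trace.re := by
  have h₀ := Complex.nonneg_iff.mp (hM.trace_mul_nonneg hQ)
  have h₁ := Complex.nonneg_iff.mp (hM'.trace_mul_nonneg hQ)
  rw [sub_mul, one_mul, trace_sub, Complex.sub_re] at h₁
  exact ⟨h₀.1, sub_nonneg.mp h₁.1⟩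

end Matrix

theorem exists_mem_Icc_mul_eq_max_zero (α : ℝ) : ∃ a ∈ Set.Icc (0 : ℝ) 1, a * α = max 0 α := by
  rcases le_total 0 α with h | h
  · exact ⟨1, by simp, by simp [h]⟩
  · exact ⟨0, by simp, by simp [h]⟩

theorem mul_le_max_zero_mul {a x t : ℝ} (hx : x ∈ Set.Icc 0 t) : a * x ≤ max 0 a * t :=
  calc a * x ≤ max 0 a * x := mul_le_mul_of_nonneg_right (le_max_right 0 a) hx.1
    _ ≤ max 0 a * t := mul_le_mul_of_nonneg_left hx.2 (le_max_left 0 a)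

namespace IsStarProjection

variable {n : Type*} [Fintype n] [DecidableEq n] {P : Matrix n n ℂ}

theorem posSemidef_smul_add_smul_one_sub (hP : IsStarProjection P) {a b : ℝ} (ha : 0 ≤ a)
    (hb : 0 ≤ b) : ((a : ℂ) • P + (b : ℂ) • (1 - P)).PosSemidef :=
  (hP.nonneg.posSemidef.smul (by exact_mod_cast ha)).add
    (hP.one_sub.nonneg.posSemidef.smul (by exact_mod_cast hb))

theorem smul_add_smul_one_sub_mul (hP : IsStarProjection P) (a b c e : ℂ) :
    (a • P + b • (1 - P)) * (c • P + e • (1 - P)) = (a * c) • P + (b * e) • (1 - P) := by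
  simp only [add_mul, mul_add, smul_mul_smul_comm, hP.isIdempotentElem.eq,
    hP.mul_one_sub_self, hP.one_sub_mul_self, hP.one_sub.isIdempotentElem.eq, smul_zero]
  abel

theorem re_trace_smul_add_smul_one_sub (a b : ℝ) :
    ((a : ℂ) • P + (b : ℂ) • (1 - P)).trace.re = a * P.trace.re + b * (1 - P).trace.re := by
  simp [trace_add, trace_smul]

theorem isGreatest_re_trace_mul (hP : IsStarProjection P) (α β : ℝ) :
    IsGreatest {x : ℝ | ∃ M : Matrix n n ℂ, M.PosSemidef ∧ (1 - M).PosSemidef ∧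
      x = (M * ((α : ℂ) • P + (β : ℂ) • (1 - P))).trace.re}
      (max 0 α * P.trace.re + max 0 β * (1 - P).trace.re) := by
  constructor
  · obtain ⟨a, ha, haα⟩ := exists_mem_Icc_mul_eq_max_zero α
    obtain ⟨b, hb, hbβ⟩ := exists_mem_Icc_mul_eq_max_zero β
    refine ⟨(a : ℂ) • P + (b : ℂ) • (1 - P), hP.posSemidef_smul_add_smul_one_sub ha.1 hb.1, ?_, ?_⟩
    · have h : (1 : Matrix n n ℂ) - ((a : ℂ) • P + (b : ℂ) • (1 - P)) =
          ((1 - a : ℝ) : ℂ) • P + ((1 - b : ℝ) : ℂ) • (1 - P) := by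
        push_cast
        module
      rw [h]
      exact hP.posSemidef_smul_add_smul_one_sub (sub_nonneg.mpr ha.2) (sub_nonneg.mpr hb.2)
    · rw [hP.smul_add_smul_one_sub_mul, ← Complex.ofReal_mul, ← Complex.ofReal_mul,
        re_trace_smul_add_smul_one_sub, haα, hbβ]
  · rintro x ⟨M, hM, hM', rfl⟩
    rw [mul_add, trace_add, Complex.add_re, Matrix.mul_smul, Matrix.mul_smul, trace_smul,
      trace_smul, smul_eq_mul, smul_eq_mul, Complex.re_ofReal_mul, Complex.re_ofReal_mul]
    exact add_le_add
      (mul_le_max_zero_mul (re_trace_mul_mem_Icc hM hM' hP.nonneg.posSemidef))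
      (mul_le_max_zero_mul (re_trace_mul_mem_Icc hM hM' hP.one_sub.nonneg.posSemidef))

end IsStarProjection

theorem sum_ite_fst_eq_snd {R : Type*} [NonAssocSemiring R] (d : ℕ) (c : R) :
    ∑ r : Fin d × Fin d, (if r.1 = r.2 then c else 0) = d * c := by
  simp [Fintype.sum_prod_type]

theorem maxEnt_mul_self (d : ℕ) : maxEnt d * maxEnt d = maxEnt d := by
  ext p q
  have h : ∀ r : Fin d × Fin d, maxEnt d p r * maxEnt d r q =
      if r.1 = r.2 then (d : ℂ)⁻¹ * maxEnt d p q else 0 := by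
    intro r
    simp only [maxEnt]
    split_ifs <;> simp_all
  rw [mul_apply, Finset.sum_congr rfl fun r _ => h r, sum_ite_fst_eq_snd, ← mul_assoc,
    mul_inv_cancel₀ (Nat.cast_ne_zero.mpr (Fin.pos p.1).ne'), one_mul]

theorem isStarProjection_maxEnt (d : ℕ) : IsStarProjection (maxEnt d) where
  isIdempotentElem := maxEnt_mul_self d
  isSelfAdjoint := by
    ext p q
    simp only [star_apply, maxEnt, and_comm]
    split_ifs <;> simp

theorem trace_maxEnt {d : ℕ} (hd : d ≠ 0) : (maxEnt d).trace = 1 := by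
  simp only [trace, diag, maxEnt, and_self, sum_ite_fst_eq_snd]
  exact mul_inv_cancel₀ (Nat.cast_ne_zero.mpr hd)

theorem re_trace_one_sub_maxEnt {d : ℕ} (hd : d ≠ 0) :
    (1 - maxEnt d).trace.re = (d : ℝ) ^ 2 - 1 := by
  simp [trace_sub, trace_maxEnt hd, sq]

theorem depolChoi_sub_smul_depolChoi (d : ℕ) (p q γ : ℝ) :
    depolChoi d q - (γ : ℂ) • depolChoi d p =
      (((1 - q) - γ * (1 - p) + (q - γ * p) / d ^ 2 : ℝ) : ℂ) • maxEnt d +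
        (((q - γ * p) / d ^ 2 : ℝ) : ℂ) • (1 - maxEnt d) := by
  unfold depolChoi
  push_cast
  module

theorem Eg_depolChoi {d : ℕ} (hd : d ≠ 0) (p q γ : ℝ) :
    Eg γ (depolChoi d q) (depolChoi d p) =
      max 0 ((1 - q) - γ * (1 - p) + (q - γ * p) / d ^ 2) +
        max 0 ((q - γ * p) / d ^ 2) * ((d : ℝ) ^ 2 - 1) := by
  rw [Eg, depolChoi_sub_smul_depolChoi, ((isStarProjection_maxEnt d).isGreatest_re_trace_mul
    _ _).csSup_eq, trace_maxEnt hd, re_trace_one_sub_maxEnt hd, Complex.one_re, mul_one]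

theorem max_zero_add_max_zero {α : Type*} [AddCommGroup α] [LinearOrder α] [IsOrderedAddMonoid α]
    {x y : α} (h : x + y ≤ 0) : max 0 x + max 0 y = max 0 (max x y) := by
  rcases le_total x 0 with hx | hx
  · rw [max_eq_left hx, zero_add, ← max_assoc, max_eq_left hx]
  · have hy : y ≤ 0 := (le_add_of_nonneg_left hx).trans h
    rw [max_eq_right hx, max_eq_left hy, add_zero, max_eq_left (hy.trans hx), max_eq_right hx]

theorem stmt_17_general (d : ℕ) (hd : 2 ≤ d) (p q : ℝ)
    (γ : ℝ) (hγ : 1 ≤ γ) :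
    Eg γ (depolChoi d q) (depolChoi d p) =
      max 0 (max ((1 - q) - γ * (1 - p) + (q - γ * p) / d ^ 2)
        ((q - γ * p) - (q - γ * p) / d ^ 2)) := by
  have hd₀ : (d : ℝ) ≠ 0 := by positivity
  have hd₁ : (1 : ℝ) ≤ (d : ℝ) ^ 2 := one_le_pow₀ (by norm_cast; omega)
  have hβ : (q - γ * p) - (q - γ * p) / d ^ 2 = (q - γ * p) / d ^ 2 * ((d : ℝ) ^ 2 - 1) := by
    field_simp
  rw [Eg_depolChoi (by omega), max_mul_of_nonneg _ _ (sub_nonneg.mpr hd₁), zero_mul, hβ,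
    max_zero_add_max_zero]
  calc _ = 1 - γ := by field_simp; ring
    _ ≤ 0 := sub_nonpos.mpr hγ

/-- Hockey-stick divergence between Choi states of depolarizing channels. -/
theorem stmt_17 (d : ℕ) (hd : 2 ≤ d) (p q : ℝ)
    (hp : p ∈ Set.Icc (0 : ℝ) 1) (hq : q ∈ Set.Icc (0 : ℝ) 1)
    (γ : ℝ) (hγ : 1 ≤ γ) :
    Eg γ (depolChoi d q) (depolChoi d p) =
      max 0 (max ((1 - q) - γ * (1 - p) + (q - γ * p) / d ^ 2)
        ((q - γ * p) - (q - γ * p) / d ^ 2)) :=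
  stmt_17_general d hd p q γ hγ
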